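/- The series Σ_{n=0}^∞ cₙ converges and Σ_{n=0}^∞ cₙ = π²/4; explicitly, 2^{3/2}π/3 − Σ_{n=1}^∞ (π/(√2·2ⁿ·n·(n+3/2)))·∏_{k=1}^{n−1}(1 − 1/(2k)) = π²/4. -/

import Mathlib

/-!
Write `Pₘ = ∏_{k=1}^m (1 - 1/(2k)) = (-1)ᵐ·binom(-1/2, m)`, so that `Σ Pₘ xᵐ = (1 - x)^{-1/2}` is the
binomial series, and `c_{m+1} = -(π/(3√2))·Pₘ 2⁻ᵐ ∫₀¹ tᵐ (1 - t^{3/2}) dt` because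
`∫₀¹ tᵐ (1 - t^{3/2}) dt = 1/(m+1) - 1/(m+5/2)`. Since `|Pₘ (t/2)ᵐ| ≤ 2⁻ᵐ` on `[0, 1]`, sum and
integral may be exchanged, giving `Σ_{n≥1} cₙ = -(π/(3√2)) ∫₀¹ (1 - t^{3/2}) / √(1 - t/2) dt`;
the integral equals `4 - 3√2π/4` through an elementary primitive involving `arcsin (√(t/2))`.
-/

open Real

/-- `c₀ = 2^{3/2}π/3` and, for `n ≥ 1`,
`cₙ = −(π/(√2·2ⁿ·n·(n+3/2)))·∏_{k=1}^{n−1}(1 − 1/(2k))`. -/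
noncomputable def cn (n : ℕ) : ℝ :=
  if n = 0 then 2 ^ ((3 : ℝ) / 2) * Real.pi / 3
  else -(Real.pi / (Real.sqrt 2 * 2 ^ n * n * (n + 3 / 2))) *
    ∏ k ∈ Finset.Icc 1 (n - 1), (1 - 1 / (2 * (k : ℝ)))

open Finset MeasureTheory

open Polynomial in
theorem Ring.choose_succ_right_eq_div {K : Type*} [Field K] [CharZero K] (a : K) (n : ℕ) :
    Ring.choose a (n + 1) = Ring.choose a n * (a - n) / (n + 1) := by
  rw [Ring.choose_eq_smul, Ring.choose_eq_smul, descPochhammer_succ_right, smeval_mul]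
  simp only [Nat.factorial_succ, Nat.cast_mul, Nat.cast_add, Nat.cast_one, mul_inv_rev, smeval_sub,
    smeval_X, pow_one, smeval_natCast, pow_zero, nsmul_eq_mul, mul_one, smul_eq_mul]
  field_simp

theorem prod_one_sub_one_div_two_mul_eq_choose (n : ℕ) :
    ∏ k ∈ Icc 1 n, (1 - 1 / (2 * (k : ℝ))) = (-1) ^ n * Ring.choose (-1 / 2 : ℝ) n := by
  induction n with
  | zero => simp
  | succ n ih =>
    rw [prod_Icc_succ_top (by omega), ih, Ring.choose_succ_right_eq_div]
    field_simp
    push_cast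
    ring

theorem prod_one_sub_one_div_two_mul_mem_Icc (n : ℕ) :
    ∏ k ∈ Icc 1 n, (1 - 1 / (2 * (k : ℝ))) ∈ Set.Icc 0 1 := by
  have hfactor : ∀ k ∈ Icc 1 n, 1 - 1 / (2 * (k : ℝ)) ∈ Set.Icc 0 1 := by
    intro k hk
    have hk : (1 : ℝ) ≤ k := by exact_mod_cast (mem_Icc.mp hk).1
    constructor
    · rw [sub_nonneg, div_le_one (by positivity)]; linarith
    · have : 0 ≤ 1 / (2 * (k : ℝ)) := by positivity
      linarith
  exact ⟨prod_nonneg fun k hk => (hfactor k hk).1,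
    prod_le_one (fun k hk => (hfactor k hk).1) fun k hk => (hfactor k hk).2⟩

theorem hasSum_prod_one_sub_one_div_two_mul_mul_pow {x : ℝ} (hx : |x| < 1) :
    HasSum (fun n : ℕ => (∏ k ∈ Icc 1 n, (1 - 1 / (2 * (k : ℝ)))) * x ^ n) (1 / √(1 - x)) := by
  have hmem : -x ∈ Metric.eball (0 : ℝ) 1 := by
    simpa [Metric.mem_eball, edist_dist, Real.dist_eq] using hx
  have h := (one_add_rpow_hasFPowerSeriesOnBall_zero (a := -1 / 2)).hasSum hmem
  simp only [FormalMultilinearSeries.ofScalars_apply_eq, binomialSeries, zero_add] at h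
  have hpos : 0 < 1 - x := by linarith [le_abs_self x]
  have hterm : ∀ n : ℕ, Ring.choose (-1 / 2 : ℝ) n • (-x) ^ n =
      (∏ k ∈ Icc 1 n, (1 - 1 / (2 * (k : ℝ)))) * x ^ n := fun n => by
    rw [prod_one_sub_one_div_two_mul_eq_choose, smul_eq_mul, neg_pow]
    ring
  have hval : (1 + -x) ^ (-1 / 2 : ℝ) = 1 / √(1 - x) := by
    rw [← sub_eq_add_neg, Real.sqrt_eq_rpow, one_div, ← Real.rpow_neg hpos.le]
    norm_num
  simpa only [hterm, hval] using h

theorem hasSum_intervalIntegral_prod_one_sub_one_div_two_mul_mul {w : ℝ → ℝ}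
    (hw : IntervalIntegrable w volume 0 1) :
    HasSum (fun m : ℕ => ∫ t in (0 : ℝ)..1, (∏ k ∈ Icc 1 m, (1 - 1 / (2 * (k : ℝ)))) *
      (t / 2) ^ m * w t) (∫ t in (0 : ℝ)..1, w t / √(1 - t / 2)) := by
  have hbound : ∀ m : ℕ, ∀ t ∈ Set.uIoc (0 : ℝ) 1,
      ‖(∏ k ∈ Icc 1 m, (1 - 1 / (2 * (k : ℝ)))) * (t / 2) ^ m * w t‖ ≤ (1 / 2) ^ m * ‖w t‖ := by
    intro m t ht
    rw [Set.uIoc_of_le zero_le_one] at ht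
    obtain ⟨hP0, hP1⟩ := prod_one_sub_one_div_two_mul_mem_Icc m
    have ht0 : 0 ≤ t / 2 := by linarith [ht.1]
    rw [norm_mul, norm_mul, norm_pow, Real.norm_of_nonneg hP0, Real.norm_of_nonneg ht0]
    gcongr
    calc _ ≤ 1 * (t / 2) ^ m := by gcongr
      _ ≤ (1 / 2) ^ m := by rw [one_mul]; gcongr; linarith [ht.2]
  refine intervalIntegral.hasSum_integral_of_dominated_convergence
    (fun m t => (1 / 2) ^ m * ‖w t‖) (fun m => ?_) (fun m => ae_of_all _ (hbound m))
    (ae_of_all _ fun t _ => (summable_geometric_two).mul_right _) ?_ (ae_of_all _ fun t ht => ?_)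
  · exact ((by fun_prop : Continuous fun t : ℝ => (∏ k ∈ Icc 1 m, (1 - 1 / (2 * (k : ℝ)))) *
      (t / 2) ^ m).aestronglyMeasurable).mul hw.def'.aestronglyMeasurable
  · simp only [tsum_mul_right, tsum_geometric_two]
    exact hw.norm.const_mul 2
  · rw [Set.uIoc_of_le zero_le_one] at ht
    have hx : |t / 2| < 1 := by rw [abs_lt]; constructor <;> linarith [ht.1, ht.2]
    simpa only [one_div_mul_eq_div] using
      (hasSum_prod_one_sub_one_div_two_mul_mul_pow hx).mul_right (w t)

theorem integral_pow_mul_one_sub_mul_sqrt (m : ℕ) :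
    ∫ t in (0 : ℝ)..1, t ^ m * (1 - t * √t) = 1 / (m + 1) - 1 / (m + 5 / 2) := by
  have hrpow : Set.EqOn (fun t : ℝ => t ^ m * (1 - t * √t))
      (fun t => t ^ m - t ^ ((m : ℝ) + 3 / 2)) (Set.uIcc 0 1) := by
    intro t ht
    rw [Set.uIcc_of_le zero_le_one] at ht
    have h : ((m : ℝ) + 3 / 2) = ((m + 1 : ℕ) : ℝ) + 1 / 2 := by push_cast; ring
    dsimp only
    rw [h, Real.rpow_add' ht.1 (by positivity), Real.rpow_natCast, ← Real.sqrt_eq_rpow]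
    ring
  have hm : (-1 : ℝ) < m + 3 / 2 := by linarith [m.cast_nonneg (α := ℝ)]
  rw [intervalIntegral.integral_congr hrpow, intervalIntegral.integral_sub
    (intervalIntegral.intervalIntegrable_pow m) (intervalIntegral.intervalIntegrable_rpow' hm),
    integral_pow, integral_rpow (Or.inl hm), Real.zero_rpow (by positivity)]
  norm_num
  ring

theorem hasDerivAt_primitive_one_sub_mul_sqrt_div_sqrt {x : ℝ} (hx : x ∈ Set.Ioo (0 : ℝ) 1) :
    HasDerivAt (fun t => √t * (t + 3) * √(1 - t / 2) - 4 * √(1 - t / 2)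
      - 3 * √2 * arcsin (√t / √2)) ((1 - x * √x) / √(1 - x / 2)) x := by
  obtain ⟨hx0, hx1⟩ := hx
  have hs0 : 0 < √x := Real.sqrt_pos.mpr hx0
  have hs2 : √x ^ 2 = x := Real.sq_sqrt hx0.le
  have hd0 : 0 < 1 - x / 2 := by linarith
  have hd : 0 < √(1 - x / 2) := Real.sqrt_pos.mpr hd0
  have hd2 : √(1 - x / 2) ^ 2 = 1 - x / 2 := Real.sq_sqrt hd0.le
  have hr : 0 < √2 := by positivity
  have hr2 : √2 ^ 2 = 2 := Real.sq_sqrt zero_le_two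
  have hsqrt : HasDerivAt Real.sqrt (1 / (2 * √x)) x := Real.hasDerivAt_sqrt hx0.ne'
  have hlin : HasDerivAt (fun t : ℝ => 1 - t / 2) (-(1 / 2)) x := by
    simpa using ((hasDerivAt_id x).div_const 2).const_sub 1
  have hsqrt_lin := (Real.hasDerivAt_sqrt hd0.ne').comp x hlin
  have harg_lt : √x / √2 < 1 := by rw [div_lt_one hr]; nlinarith
  have harg_gt : -1 < √x / √2 := by linarith [div_pos hs0 hr]
  have harcsin := (Real.hasDerivAt_arcsin harg_gt.ne' harg_lt.ne).comp x (hsqrt.div_const √2)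
  rw [show 1 - (√x / √2) ^ 2 = 1 - x / 2 by rw [div_pow, hs2, hr2]] at harcsin
  have h := ((hsqrt.mul ((hasDerivAt_id x).add_const 3)).mul hsqrt_lin).sub
    (hsqrt_lin.const_mul 4) |>.sub (harcsin.const_mul (3 * √2))
  refine h.congr_deriv ?_
  simp only [Function.comp_apply, id, Pi.mul_apply]
  set s := √x
  set d := √(1 - x / 2)
  field_simp
  linear_combination (x + 1) * hs2 + (2 * (x + 3 + 2 * s ^ 2)) * hd2

theorem integral_one_sub_mul_sqrt_div_sqrt :
    ∫ t in (0 : ℝ)..1, (1 - t * √t) / √(1 - t / 2) = 4 - 3 * √2 * π / 4 := by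
  have hcont : ContinuousOn (fun t => √t * (t + 3) * √(1 - t / 2) - 4 * √(1 - t / 2)
      - 3 * √2 * arcsin (√t / √2)) (Set.Icc 0 1) := by
    have := Real.continuous_arcsin
    fun_prop
  have hint : IntervalIntegrable (fun t => (1 - t * √t) / √(1 - t / 2)) volume 0 1 := by
    refine ContinuousOn.intervalIntegrable (ContinuousOn.div (by fun_prop) (by fun_prop) ?_)
    intro t ht
    rw [Set.uIcc_of_le zero_le_one] at ht
    exact (Real.sqrt_pos.mpr (by linarith [ht.2])).ne'
  have harcsin : arcsin (√2)⁻¹ = π / 4 := by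
    have h : (√2)⁻¹ = √2 / 2 := by
      field_simp
      exact (Real.sq_sqrt zero_le_two).symm
    rw [h, ← Real.sin_pi_div_four]
    exact Real.arcsin_sin (by linarith [Real.pi_pos]) (by linarith [Real.pi_pos])
  rw [intervalIntegral.integral_eq_sub_of_hasDerivAt_of_le zero_le_one hcont
    (fun x hx => hasDerivAt_primitive_one_sub_mul_sqrt_div_sqrt hx) hint]
  norm_num [harcsin]
  ring

theorem cn_succ_eq_mul_integral (m : ℕ) :
    cn (m + 1) = -(π / (3 * √2)) * ∫ t in (0 : ℝ)..1,
      (∏ k ∈ Icc 1 m, (1 - 1 / (2 * (k : ℝ)))) * (t / 2) ^ m * (1 - t * √t) := by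
  have h : ∀ t : ℝ, (∏ k ∈ Icc 1 m, (1 - 1 / (2 * (k : ℝ)))) * (t / 2) ^ m * (1 - t * √t) =
      (∏ k ∈ Icc 1 m, (1 - 1 / (2 * (k : ℝ)))) / 2 ^ m * (t ^ m * (1 - t * √t)) := fun t => by
    rw [div_pow]; ring
  simp only [h, intervalIntegral.integral_const_mul, integral_pow_mul_one_sub_mul_sqrt, cn,
    if_neg m.succ_ne_zero, Nat.add_sub_cancel]
  have : (m : ℝ) + 1 ≠ 0 := by positivity
  have : (m : ℝ) + 5 / 2 ≠ 0 := by positivity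
  field_simp
  push_cast
  ring

/-- The series `Σ_{n=0}^∞ cₙ` converges and its sum equals `π²/4`; explicitly,
`2^{3/2}π/3 − Σ_{n=1}^∞ (π/(√2·2ⁿ·n·(n+3/2)))·∏_{k=1}^{n−1}(1 − 1/(2k)) = π²/4`. -/
theorem hasSum_cn : HasSum cn (Real.pi ^ 2 / 4) := by
  have hw : IntervalIntegrable (fun t : ℝ => 1 - t * √t) volume 0 1 :=
    (by fun_prop : Continuous fun t : ℝ => 1 - t * √t).intervalIntegrable 0 1
  have hvalue : π ^ 2 / 4 - cn 0 = -(π / (3 * √2)) * (4 - 3 * √2 * π / 4) := by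
    have h2 : (2 : ℝ) ^ ((3 : ℝ) / 2) = 2 * √2 := by
      rw [show (3 : ℝ) / 2 = 1 + 1 / 2 by norm_num, Real.rpow_add two_pos, Real.rpow_one,
        Real.sqrt_eq_rpow]
    have hs : √2 ^ 2 = 2 := Real.sq_sqrt zero_le_two
    simp only [cn, ↓reduceIte, h2]
    field_simp
    linear_combination (-8) * hs
  rw [← hasSum_nat_add_iff' 1, sum_range_one, funext cn_succ_eq_mul_integral, hvalue,
    ← integral_one_sub_mul_sqrt_div_sqrt]
  exact (hasSum_intervalIntegral_prod_one_sub_one_div_two_mul_mul hw).mul_left _
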